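/- Fix ξ ∈ ℝ, let α = ξ and ν = ξ², let u be a normalized (α,ξ,ν)-eigenfunction, and let k₀(t) := ( −ξ/2 + (2/3)(ξ−t) ) u(t) + ( (2/3)(1−ξ²) + ξ(ξ−t) − (1/3)(ξ−t)² ) u'(t). Then ∫₀^∞ (C_ξ k₀)(t) u(t) dt = −3/4 + (11/4)ξ² − (19/8)ξ⁴ + ( −(37/48)ξ + (19/16)ξ³ ) u(0)². -/

import Mathlib

open MeasureTheory

/-- An `(α,ξ,ν)`-eigenfunction: a smooth function on `ℝ` which, together with all its
derivatives, decays faster than any polynomial on `[0,∞)`, solves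
`−u'' + ((ξ−t)² + 1)u = νu` on `[0,∞)`, and satisfies the Robin condition
`u'(0) = (α−ξ)u(0)`. -/
def IsEigen (α ξ ν : ℝ) (u : ℝ → ℝ) : Prop :=
  ContDiff ℝ (⊤ : ℕ∞) u ∧
  (∀ n k : ℕ, ∃ C : ℝ, ∀ t : ℝ, 0 ≤ t → |t| ^ k * |iteratedDeriv n u t| ≤ C) ∧
  (∀ t : ℝ, 0 ≤ t → -(deriv (deriv u) t) + ((ξ - t) ^ 2 + 1) * u t = ν * u t) ∧
  deriv u 0 = (α - ξ) * u 0

/-- The operator `C_ξ w = 2( t·(n₀w) − ξw − w' + t²(ξ−t)w )`, where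
`(n₀w)(t) = −w''(t) + ((ξ−t)² + 1)w(t)`. -/
noncomputable def Cxi (ξ : ℝ) (w : ℝ → ℝ) (t : ℝ) : ℝ :=
  2 * (t * (-(deriv (deriv w) t) + ((ξ - t) ^ 2 + 1) * w t)
    - ξ * w t - deriv w t + t ^ 2 * (ξ - t) * w t)

/-- The explicit corrector
`k₀ = (−ξ/2 + (2/3)(ξ−t))u + ((2/3)(1−ξ²) + ξ(ξ−t) − (1/3)(ξ−t)²)u'`. -/
noncomputable def kzero (ξ : ℝ) (u : ℝ → ℝ) (t : ℝ) : ℝ :=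
  (-ξ / 2 + 2 / 3 * (ξ - t)) * u t
    + (2 / 3 * (1 - ξ ^ 2) + ξ * (ξ - t) - 1 / 3 * (ξ - t) ^ 2) * deriv u t

open Filter Asymptotics Set Polynomial

/-!
On `[0,∞)` the eigenvalue equation reads `u'' = W u` with `W = t² − 2ξt + 1`, so the derivative of
`A u + B u'` (with `A`, `B` polynomials) is again of this form. Hence `k₀`, `k₀'`, `k₀''` and then
`(C_ξ k₀) u` are explicit: the latter equals `λ u² + u (P u + Q u')` with
`λ = −3/4 + (11/4)ξ² − (19/8)ξ⁴`. The remainder is the exact derivative of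
`G = p u² − r' u u' + r u'²` for explicit polynomials `p`, `r`. Integrating over `(0,∞)`, the
normalization gives `λ`, rapid decay kills `G` at infinity, and the Robin condition `u'(0) = 0`
leaves the boundary term `−G(0) = −p(0) u(0)²`.
-/

lemma superpolynomialDecay_of_forall_abs_le {f : ℝ → ℝ}
    (h : ∀ k : ℕ, ∃ C : ℝ, ∀ t : ℝ, 0 ≤ t → |t| ^ k * |f t| ≤ C) :
    SuperpolynomialDecay atTop id f := by
  refine (superpolynomialDecay_iff_abs_isBoundedUnder f tendsto_id).2 fun k => ?_
  obtain ⟨C, hC⟩ := h k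
  refine ⟨C, eventually_map.2 ((eventually_ge_atTop 0).mono fun t ht => ?_)⟩
  simpa [abs_mul, abs_pow] using hC t ht

lemma SuperpolynomialDecay.integrableOn_Ioi {f : ℝ → ℝ} (hf : SuperpolynomialDecay atTop id f)
    (hc : Continuous f) (a : ℝ) : IntegrableOn f (Ioi a) := by
  have ho : f =O[atTop] fun x : ℝ => x ^ (-2 : ℝ) := by
    simpa [← Real.rpow_intCast] using (superpolynomialDecay_iff_isBigO f tendsto_id).1 hf (-2)
  exact (integrableOn_Ici_iff_integrableOn_Ioi).mp <|
    (hc.locallyIntegrable.locallyIntegrableOn _).integrableOn_of_isBigO_atTop ho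
      (integrableAtFilter_rpow_atTop_iff.2 (by norm_num))

lemma SuperpolynomialDecay.tendsto_zero {f : ℝ → ℝ} (hf : SuperpolynomialDecay atTop id f) :
    Tendsto f atTop (nhds 0) := by
  simpa using hf 0

section PolynomialCoefficients

variable {u : ℝ → ℝ}

noncomputable def polyLinComb (A B : ℝ[X]) (u : ℝ → ℝ) (x : ℝ) : ℝ :=
  A.eval x * u x + B.eval x * deriv u x

/-- The `u u'` coefficient `−r'` makes the `u'²` terms cancel in the derivative when
`u'' = W u`. -/
noncomputable def polyQuadForm (p r : ℝ[X]) (u : ℝ → ℝ) (x : ℝ) : ℝ :=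
  p.eval x * u x ^ 2 - (derivative r).eval x * u x * deriv u x + r.eval x * deriv u x ^ 2

lemma hasDerivAt_polyLinComb (A B : ℝ[X]) {W : ℝ[X]} {x : ℝ} (hu : ContDiff ℝ 2 u)
    (hW : deriv (deriv u) x = W.eval x * u x) :
    HasDerivAt (polyLinComb A B u)
      (polyLinComb (derivative A + B * W) (A + derivative B) u x) x := by
  have h := ((A.hasDerivAt x).mul (hu.differentiable two_ne_zero x).hasDerivAt).add
    ((B.hasDerivAt x).mul (hu.differentiable_deriv_two x).hasDerivAt)
  refine HasDerivAt.congr_deriv (f := polyLinComb A B u) h ?_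
  simp only [polyLinComb, eval_add, eval_mul, hW]
  ring

lemma deriv_polyLinComb_eqOn (A B : ℝ[X]) {W : ℝ[X]} {s : Set ℝ} (hu : ContDiff ℝ 2 u)
    (hW : ∀ x ∈ s, deriv (deriv u) x = W.eval x * u x) :
    EqOn (deriv (polyLinComb A B u)) (polyLinComb (derivative A + B * W) (A + derivative B) u) s :=
  fun x hx => (hasDerivAt_polyLinComb A B hu (hW x hx)).deriv

lemma hasDerivAt_polyQuadForm (p r : ℝ[X]) {W : ℝ[X]} {x : ℝ} (hu : ContDiff ℝ 2 u)
    (hW : deriv (deriv u) x = W.eval x * u x) :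
    HasDerivAt (polyQuadForm p r u) (u x * polyLinComb (derivative p - derivative r * W)
      (2 * p - derivative (derivative r) + 2 * r * W) u x) x := by
  have hu₀ := (hu.differentiable two_ne_zero x).hasDerivAt
  have hu₁ := (hu.differentiable_deriv_two x).hasDerivAt
  have h := (((p.hasDerivAt x).mul (hu₀.pow 2)).sub
    (((derivative r).hasDerivAt x).mul hu₀ |>.mul hu₁)).add ((r.hasDerivAt x).mul (hu₁.pow 2))
  refine HasDerivAt.congr_deriv (f := polyQuadForm p r u) h ?_
  simp only [polyLinComb, eval_add, eval_sub, eval_mul, hW, eval_ofNat, Pi.mul_apply, Pi.pow_apply]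
  push_cast
  ring

lemma continuous_polyLinComb (A B : ℝ[X]) (hu : ContDiff ℝ 2 u) :
    Continuous (polyLinComb A B u) :=
  (A.continuous.mul hu.continuous).add
    (B.continuous.mul (hu.differentiable_deriv_two).continuous)

lemma continuous_polyQuadForm (p r : ℝ[X]) (hu : ContDiff ℝ 2 u) :
    Continuous (polyQuadForm p r u) := by
  have := hu.continuous
  have := (hu.differentiable_deriv_two).continuous
  unfold polyQuadForm
  fun_prop

variable (hu : SuperpolynomialDecay atTop id u) (hu' : SuperpolynomialDecay atTop id (deriv u))
include hu hu'

lemma superpolynomialDecay_polyLinComb (A B : ℝ[X]) :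
    SuperpolynomialDecay atTop id (polyLinComb A B u) :=
  ((hu.polynomial_mul A).add (hu'.polynomial_mul B)).congr fun _ => rfl

lemma superpolynomialDecay_polyQuadForm (p r : ℝ[X]) :
    SuperpolynomialDecay atTop id (polyQuadForm p r u) :=
  ((((hu.mul hu).polynomial_mul p).add ((hu.mul hu').polynomial_mul (-derivative r))).add
    ((hu'.mul hu').polynomial_mul r)).congr fun x => by simp [polyQuadForm]; ring

end PolynomialCoefficients

section Kzero

variable {ξ : ℝ} {u : ℝ → ℝ}

/-- `(ξ − t)² + 1 − ξ²`: with `ν = ξ²` the eigenvalue equation is `u'' = W u`. -/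
noncomputable def reducedPotential (ξ : ℝ) : ℝ[X] := X ^ 2 - C (2 * ξ) * X + 1

noncomputable def kzeroCoeffU (ξ : ℝ) : ℝ[X] := C (ξ / 6) - C (2 / 3) * X

noncomputable def kzeroCoeffDeriv (ξ : ℝ) : ℝ[X] := C (2 / 3) - C (ξ / 3) * X - C (1 / 3) * X ^ 2

/-- This `p` and the `r` below were found by solving `G' = (C_ξ k₀) u − λ u²` for
`G = polyQuadForm p r u` with a polynomial ansatz. -/
noncomputable def primitiveCoeffU (ξ : ℝ) : ℝ[X] :=
  C (37 / 48 * ξ - 19 / 16 * ξ ^ 3) + C (59 / 48 - 121 / 48 * ξ ^ 2 + 19 / 8 * ξ ^ 4) * X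
    + C (175 / 48 * ξ - 19 / 48 * ξ ^ 3) * X ^ 2 + C (-29 / 48 - 79 / 48 * ξ ^ 2) * X ^ 3
    - C (7 / 8 * ξ) * X ^ 4 + C (7 / 8) * X ^ 5

noncomputable def primitiveCoeffDeriv (ξ : ℝ) : ℝ[X] :=
  C (-71 / 48 * ξ + 19 / 16 * ξ ^ 3) + C (23 / 48 + 9 / 16 * ξ ^ 2) * X - C (5 / 24 * ξ) * X ^ 2
    - C (13 / 24) * X ^ 3

noncomputable def remainderCoeffU (ξ : ℝ) : ℝ[X] :=
  derivative (primitiveCoeffU ξ) - derivative (primitiveCoeffDeriv ξ) * reducedPotential ξ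

noncomputable def remainderCoeffDeriv (ξ : ℝ) : ℝ[X] :=
  2 * primitiveCoeffU ξ - derivative (derivative (primitiveCoeffDeriv ξ))
    + 2 * primitiveCoeffDeriv ξ * reducedPotential ξ

lemma deriv_deriv_eq_reducedPotential
    (hODE : ∀ t : ℝ, 0 ≤ t → -(deriv (deriv u) t) + ((ξ - t) ^ 2 + 1) * u t = ξ ^ 2 * u t)
    {t : ℝ} (ht : 0 ≤ t) : deriv (deriv u) t = (reducedPotential ξ).eval t * u t := by
  simp only [reducedPotential, eval_add, eval_sub, eval_mul, eval_pow, eval_C, eval_X, eval_one]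
  linear_combination -hODE t ht

lemma kzero_eq_polyLinComb : kzero ξ u = polyLinComb (kzeroCoeffU ξ) (kzeroCoeffDeriv ξ) u := by
  ext t
  simp only [kzero, polyLinComb, kzeroCoeffU, kzeroCoeffDeriv, eval_sub, eval_mul, eval_pow,
    eval_C, eval_X]
  ring

lemma Cxi_kzero_mul_eq (hu : ContDiff ℝ 2 u)
    (hW : ∀ t : ℝ, 0 ≤ t → deriv (deriv u) t = (reducedPotential ξ).eval t * u t)
    {t : ℝ} (ht : 0 < t) :
    Cxi ξ (kzero ξ u) t * u t = (-3 / 4 + 11 / 4 * ξ ^ 2 - 19 / 8 * ξ ^ 4) * u t ^ 2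
      + u t * polyLinComb (remainderCoeffU ξ) (remainderCoeffDeriv ξ) u t := by
  have hW' : ∀ x ∈ Ioi (0 : ℝ), deriv (deriv u) x = (reducedPotential ξ).eval x * u x :=
    fun x hx => hW x (le_of_lt hx)
  have h₁ := deriv_polyLinComb_eqOn (kzeroCoeffU ξ) (kzeroCoeffDeriv ξ) hu hW'
  have h₂ := (h₁.eventuallyEq_of_mem (Ioi_mem_nhds ht)).deriv_eq.trans
    (deriv_polyLinComb_eqOn _ _ hu hW' ht)
  rw [Cxi, kzero_eq_polyLinComb, h₂, h₁ ht]
  simp only [polyLinComb, remainderCoeffU, remainderCoeffDeriv, reducedPotential, kzeroCoeffU,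
    kzeroCoeffDeriv, primitiveCoeffU, primitiveCoeffDeriv, derivative_add, derivative_sub, derivative_mul,
    derivative_C, derivative_X, derivative_X_pow, derivative_one, eval_add, eval_sub, eval_mul,
    derivative_zero, eval_pow, eval_C, eval_X, eval_one, eval_zero, eval_ofNat]
  push_cast
  ring

end Kzero

/-- For a normalized `(ξ,ξ,ξ²)`-eigenfunction `u`,
`∫₀^∞ (C_ξ k₀) u dt = −3/4 + (11/4)ξ² − (19/8)ξ⁴ + (−(37/48)ξ + (19/16)ξ³)u(0)²`. -/
theorem Cxi_kzero_expectation
    (ξ : ℝ) (u : ℝ → ℝ) (hu : IsEigen ξ ξ (ξ ^ 2) u)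
    (hnorm : ∫ t in Set.Ioi (0 : ℝ), u t ^ 2 = 1) :
    ∫ t in Set.Ioi (0 : ℝ), Cxi ξ (kzero ξ u) t * u t
      = -3 / 4 + 11 / 4 * ξ ^ 2 - 19 / 8 * ξ ^ 4
        + (-(37 / 48) * ξ + 19 / 16 * ξ ^ 3) * u 0 ^ 2 := by
  obtain ⟨hsmooth, hbound, hODE, hRobin⟩ := hu
  have hC2 : ContDiff ℝ 2 u := contDiff_infty.1 hsmooth 2
  have hW t (ht : 0 ≤ t) := deriv_deriv_eq_reducedPotential hODE ht
  have hdec : SuperpolynomialDecay atTop id u :=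
    superpolynomialDecay_of_forall_abs_le fun k => by simpa using hbound 0 k
  have hdec' : SuperpolynomialDecay atTop id (deriv u) :=
    superpolynomialDecay_of_forall_abs_le fun k => by simpa using hbound 1 k
  have hsq : IntegrableOn (fun t => u t ^ 2) (Ioi 0) :=
    SuperpolynomialDecay.integrableOn_Ioi ((hdec.mul hdec).congr fun t => (sq (u t)).symm)
      (hC2.continuous.pow 2) 0
  have hrem : IntegrableOn
      (fun t => u t * polyLinComb (remainderCoeffU ξ) (remainderCoeffDeriv ξ) u t) (Ioi 0) :=
    SuperpolynomialDecay.integrableOn_Ioi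
      (hdec.mul (superpolynomialDecay_polyLinComb hdec hdec' _ _))
      (hC2.continuous.mul (continuous_polyLinComb _ _ hC2)) 0
  have hprimitive : ∫ t in Ioi 0, u t * polyLinComb (remainderCoeffU ξ) (remainderCoeffDeriv ξ) u t
      = 0 - polyQuadForm (primitiveCoeffU ξ) (primitiveCoeffDeriv ξ) u 0 :=
    integral_Ioi_of_hasDerivAt_of_tendsto (continuous_polyQuadForm _ _ hC2).continuousWithinAt
    (fun t ht => hasDerivAt_polyQuadForm _ _ hC2 (hW t ht.le)) hrem
    (SuperpolynomialDecay.tendsto_zero (superpolynomialDecay_polyQuadForm hdec hdec' _ _))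
  rw [setIntegral_congr_fun measurableSet_Ioi fun t ht => Cxi_kzero_mul_eq hC2 hW ht,
    integral_add (hsq.const_mul _) hrem, integral_const_mul, hnorm, hprimitive]
  simp only [polyQuadForm, primitiveCoeffU, hRobin, sub_self, zero_mul, eval_add, eval_sub,
    eval_mul, eval_C, eval_pow, eval_X]
  ring
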